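/- arXiv:2601.20531 — 2 statements merged into one kernel-verified Lean document; each statement's English description precedes it below -/
import Mathlib

section
/- For probability measures on ℝ^m, convolution is translation-compatible with quantization: if ν = ∑_{i=1}^k a_i δ_{x_i} is finitely supported and A ⊆ ℝ^m is a finite set, then for the set A' = ∪_i (A + x_i) of cardinality at most k·Card(A), one has d(x+x_i, A') ≤ d(x, A) for all x and all i; consequently the n-th geometric-mean quantization error satisfies log e_{kn}(μ*ν) ≤ log e_n(μ). -/
/-!
Translating the codebook `A` by every atom `xᵢ` of `ν` gives a codebook `A'` with at most
`k · Card A` points such that `d(z + xᵢ, A') ≤ d(z, A)`; integrating the logarithm of this against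
`∑ aᵢ (μ shifted by xᵢ)` gives the bound on `log e_{kn}(μ * ν)`.

The one subtlety is Lean's `log 0 = 0`: the pointwise bound on logarithms can only fail where
`z + xᵢ ∈ A'` but `z ∉ A`, a finite set of points `z`. This set is null when `μ` has no atoms, and
when `μ` has an atom `q` (in a space where `q` is not isolated) the lower bound on the codebook
integrals fails, since a single code point approaching `q` drives the integral to `-∞`.
-/

open MeasureTheory Metric

noncomputable def logEn (m n : ℕ) (μ : Measure (EuclideanSpace ℝ (Fin m))) : ℝ :=
  sInf {y | ∃ A : Finset (EuclideanSpace ℝ (Fin m)), A.Nonempty ∧ A.card ≤ n ∧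
    y = ∫ x, Real.log (infDist x (A : Set (EuclideanSpace ℝ (Fin m)))) ∂μ}

open Filter Topology Finset
open scoped NNReal

def LogDistIntegrable {X : Type*} [PseudoMetricSpace X] [MeasurableSpace X] (μ : Measure X) :
    Prop :=
  ∀ B : Finset X, B.Nonempty → Integrable (fun z => Real.log (infDist z (B : Set X))) μ

theorem Real.log_le_one_add_abs_log_of_le_add_one {t u : ℝ} (ht : 0 ≤ t) (hu : 0 ≤ u)
    (htu : t ≤ u + 1) : Real.log t ≤ 1 + |Real.log u| := by
  rcases ht.eq_or_lt with rfl | ht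
  · simp only [Real.log_zero]
    positivity
  refine (Real.log_le_log ht htu).trans ?_
  rcases le_total u 1 with hu1 | hu1
  · linarith [Real.log_le_sub_one_of_pos (by linarith : 0 < u + 1), abs_nonneg (Real.log u)]
  · have hupos : 0 < u := by linarith
    have hquot : Real.log ((u + 1) / u) ≤ 1 := by
      have hlog := Real.log_le_sub_one_of_pos (x := (u + 1) / u) (by positivity)
      have hsub : (u + 1) / u - 1 ≤ 1 := by
        rw [div_sub_one hupos.ne', div_le_one hupos]
        linarith
      linarith
    rw [Real.log_div (by linarith) hupos.ne'] at hquot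
    linarith [le_abs_self (Real.log u)]

section Atom

variable {X : Type*} [MetricSpace X] [MeasurableSpace X] [MeasurableSingletonClass X]

/-- Near an atom `q`, a single code point `c` makes the integral of `log d(·, c)` arbitrarily
negative: the atom contributes `ρ{q} · log d(q, c)`, and once `d(q, c) ≤ 1` the rest is dominated
by `1 + |log d(·, q)|`. -/
theorem not_bddBelow_integral_log_infDist_of_atom (ρ : Measure X) [IsFiniteMeasure ρ]
    (hρ : LogDistIntegrable ρ) {q : X} (hq : ρ {q} ≠ 0) [(𝓝[≠] q).NeBot] {N : ℕ} (hN : 1 ≤ N) :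
    ¬ BddBelow {y | ∃ B : Finset X, B.Nonempty ∧ B.card ≤ N ∧
      y = ∫ z, Real.log (infDist z (B : Set X)) ∂ρ} := by
  rintro ⟨L, hL⟩
  have hlog_dist (c : X) : Integrable (fun z => Real.log (dist z c)) ρ := by
    simpa only [coe_singleton, infDist_singleton] using hρ {c} (singleton_nonempty c)
  set h : X → ℝ := fun z => 1 + |Real.log (dist z q)|
  have hh : Integrable h ρ := (integrable_const 1).add (hlog_dist q).abs
  set K := ∫ z, h z ∂ρ
  set w := ρ.real {q}
  have hw : 0 < w := ENNReal.toReal_pos hq (measure_ne_top ρ _)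
  obtain ⟨c, hc, hcq⟩ : ({q}ᶜ ∩ ball q (min 1 (Real.exp ((L - K) / w)))).Nonempty :=
    nonempty_of_mem (inter_mem_nhdsWithin _ (ball_mem_nhds q (by positivity)))
  rw [Set.mem_compl_singleton_iff] at hc
  rw [mem_ball, lt_min_iff] at hcq
  have hbound (z : X) :
      Real.log (dist z c) ≤ h z + ({q} : Set X).indicator (fun _ => (L - K) / w - 1) z := by
    by_cases hz : z = q
    · subst hz
      have hlog := (Real.log_lt_iff_lt_exp (dist_pos.2 hc.symm)).2 (dist_comm c z ▸ hcq.2)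
      simp only [h, dist_self, Real.log_zero, abs_zero, add_zero,
        Set.indicator_of_mem (Set.mem_singleton z), add_sub_cancel]
      linarith
    · rw [Set.indicator_of_notMem (show z ∉ ({q} : Set X) from hz), add_zero]
      exact Real.log_le_one_add_abs_log_of_le_add_one dist_nonneg dist_nonneg
        ((dist_triangle z q c).trans (by rw [dist_comm q c]; linarith [hcq.1]))
  have hupper : ∫ z, Real.log (dist z c) ∂ρ ≤ K + w * ((L - K) / w - 1) := by
    have hind : Integrable (({q} : Set X).indicator fun _ => (L - K) / w - 1) ρ :=
      (integrable_const _).indicator (measurableSet_singleton q)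
    calc ∫ z, Real.log (dist z c) ∂ρ
        ≤ ∫ z, (h z + ({q} : Set X).indicator (fun _ => (L - K) / w - 1) z) ∂ρ :=
          integral_mono (hlog_dist c) (hh.add hind) hbound
      _ = K + w * ((L - K) / w - 1) := by
          rw [integral_add hh hind, integral_indicator_const _ (measurableSet_singleton q),
            smul_eq_mul]
  have hlower : L ≤ ∫ z, Real.log (dist z c) ∂ρ :=
    hL ⟨{c}, singleton_nonempty c, by simpa using hN, by simp [infDist_singleton]⟩
  rw [mul_sub, mul_div_cancel₀ _ hw.ne'] at hupper
  linarith

end Atom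

section CodebookTranslates

variable {E ι : Type*} [NormedAddCommGroup E] [DecidableEq E] [Fintype ι]

theorem card_biUnion_image_add_le (A : Finset E) (x : ι → E) :
    (univ.biUnion fun i => A.image (· + x i)).card ≤ Fintype.card ι * A.card :=
  card_biUnion_le_card_mul _ _ _ fun _ _ => card_image_le

theorem infDist_add_le_infDist_biUnion_image_add {A : Finset E} (hA : A.Nonempty) (x : ι → E)
    (z : E) (i : ι) :
    infDist (z + x i) ((univ.biUnion fun j => A.image (· + x j) : Finset E) : Set E)
      ≤ infDist z (A : Set E) := by
  calc infDist (z + x i) ((univ.biUnion fun j => A.image (· + x j) : Finset E) : Set E)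
      ≤ infDist (z + x i) ((· + x i) '' (A : Set E)) := by
        refine infDist_le_infDist_of_subset ?_ ((coe_nonempty.2 hA).image _)
        rw [← coe_image]
        exact coe_subset.2 (subset_biUnion_of_mem (fun j => A.image (· + x j)) (mem_univ i))
    _ = infDist z (A : Set E) := infDist_image (IsometryEquiv.addRight (x i)).isometry

theorem log_infDist_add_le_of_add_mem_imp_mem {A : Finset E} (hA : A.Nonempty) (x : ι → E)
    {z : E} {i : ι}
    (hz : z + x i ∈ (univ.biUnion fun j => A.image (· + x j)) → z ∈ A) :
    Real.log (infDist (z + x i) ((univ.biUnion fun j => A.image (· + x j) : Finset E) : Set E))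
      ≤ Real.log (infDist z (A : Set E)) := by
  set A' := univ.biUnion fun j => A.image (· + x j)
  by_cases hmem : z + x i ∈ A'
  · rw [infDist_zero_of_mem (mem_coe.2 hmem), infDist_zero_of_mem (mem_coe.2 (hz hmem))]
  · have hA' : A'.Nonempty := (univ_nonempty_iff.2 ⟨i⟩).biUnion fun j _ => hA.image _
    exact Real.log_le_log
      ((A'.finite_toSet.isClosed.notMem_iff_infDist_pos (coe_nonempty.2 hA')).1 hmem)
      (infDist_add_le_infDist_biUnion_image_add hA x z i)

end CodebookTranslates

section TranslationInvariance

variable {E : Type*} [NormedAddCommGroup E] [MeasurableSpace E] {μ : Measure E}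

theorem LogDistIntegrable.comp_add_right (hμ : LogDistIntegrable μ) {B : Finset E}
    (hB : B.Nonempty) (v : E) : Integrable (fun z => Real.log (infDist (z + v) (B : Set E))) μ := by
  classical
  have hshift (z : E) : infDist (z + v) (B : Set E) = infDist z (B.image (· - v) : Set E) := by
    rw [coe_image, ← infDist_image (IsometryEquiv.subRight v).isometry (x := z + v)]
    simp
  simpa only [hshift] using hμ _ (hB.image _)

theorem ae_add_notMem_of_measure_singleton_eq_zero (hμ : ∀ z, μ {z} = 0) (S : Finset E)
    (v : E) : ∀ᵐ z ∂μ, z + v ∉ S := by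
  have : NullSingletonClass μ := ⟨hμ⟩
  exact measure_eq_zero_iff_ae_notMem.1
    ((S.finite_toSet.preimage (add_left_injective v).injOn).measure_zero μ)

end TranslationInvariance

section Mixture

variable {E ι : Type*} [NormedAddCommGroup E] [MeasurableSpace E] [BorelSpace E] [Fintype ι]
  {μ : Measure E}

theorem integrable_map_add {f : E → ℝ} {v : E} (hf : Integrable (fun z => f (z + v)) μ) :
    Integrable f (μ.map (· + v)) := by
  rw [← MeasurableEquiv.coe_addRight,
    (MeasurableEquiv.addRight v).measurableEmbedding.integrable_map_iff]
  exact hf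

theorem integrable_sum_smul_map_add {a : ι → ℝ≥0} {x : ι → E} {f : E → ℝ}
    (hf : ∀ i, Integrable (fun z => f (z + x i)) μ) :
    Integrable f (∑ i, a i • μ.map (· + x i)) :=
  integrable_finsetSum_measure.2 fun i _ => (integrable_map_add (hf i)).smul_measure_nnreal

theorem integral_sum_smul_map_add {a : ι → ℝ≥0} {x : ι → E} {f : E → ℝ}
    (hf : ∀ i, Integrable (fun z => f (z + x i)) μ) :
    ∫ z, f z ∂(∑ i, a i • μ.map (· + x i)) = ∑ i, (a i : ℝ) * ∫ z, f (z + x i) ∂μ := by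
  rw [integral_finsetSum_measure fun i _ => (integrable_map_add (hf i)).smul_measure_nnreal]
  refine sum_congr rfl fun i _ => ?_
  rw [integral_smul_nnreal_measure, ← MeasurableEquiv.coe_addRight, integral_map_equiv]
  rfl

theorem LogDistIntegrable.sum_smul_map_add (hμ : LogDistIntegrable μ) (a : ι → ℝ≥0) (x : ι → E) :
    LogDistIntegrable (∑ i, a i • μ.map (· + x i)) :=
  fun _ hB => integrable_sum_smul_map_add fun i => hμ.comp_add_right hB (x i)

theorem sum_smul_map_add_singleton_ne_zero {a : ι → ℝ≥0} (x : ι → E) {i : ι}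
    (hi : a i ≠ 0) {z : E} (hz : μ {z} ≠ 0) : (∑ j, a j • μ.map (· + x j)) {z + x i} ≠ 0 := by
  rw [Measure.finsetSum_apply, ← pos_iff_ne_zero]
  refine lt_of_lt_of_le ?_ (single_le_sum (fun j _ => zero_le) (mem_univ i))
  rw [Measure.smul_apply, ← MeasurableEquiv.coe_addRight, MeasurableEquiv.map_apply]
  simp [pos_iff_ne_zero, hi, hz]

theorem integral_log_infDist_biUnion_image_add_le [DecidableEq E] [Nonempty ι]
    (hμ : LogDistIntegrable μ) {a : ι → ℝ≥0} (ha : ∑ i, a i = 1) (x : ι → E) {A : Finset E}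
    (hA : A.Nonempty)
    (hsep : ∀ i, ∀ᵐ z ∂μ, z + x i ∈ univ.biUnion (fun j => A.image (· + x j)) → z ∈ A) :
    ∫ z, Real.log (infDist z ((univ.biUnion fun j => A.image (· + x j) : Finset E) : Set E))
        ∂(∑ i, a i • μ.map (· + x i))
      ≤ ∫ z, Real.log (infDist z (A : Set E)) ∂μ := by
  have hA' : (univ.biUnion fun j => A.image (· + x j)).Nonempty :=
    univ_nonempty.biUnion fun j _ => hA.image _
  rw [integral_sum_smul_map_add fun i => hμ.comp_add_right hA' (x i)]
  calc ∑ i, (a i : ℝ) * ∫ z, Real.log (infDist (z + x i)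
          ((univ.biUnion fun j => A.image (· + x j) : Finset E) : Set E)) ∂μ
      ≤ ∑ i, (a i : ℝ) * ∫ z, Real.log (infDist z (A : Set E)) ∂μ := by
        refine sum_le_sum fun i _ => mul_le_mul_of_nonneg_left ?_ (a i).coe_nonneg
        exact integral_mono_ae (hμ.comp_add_right hA' (x i)) (hμ A hA)
          ((hsep i).mono fun z hz => log_infDist_add_le_of_add_mem_imp_mem hA x hz)
    _ = ∫ z, Real.log (infDist z (A : Set E)) ∂μ := by
        rw [← sum_mul, ← NNReal.coe_sum, ha, NNReal.coe_one, one_mul]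

end Mixture

theorem convolution_codebook_general (m k n : ℕ) (hn : 0 < n)
    [DecidableEq (EuclideanSpace ℝ (Fin m))]
    (μ : Measure (EuclideanSpace ℝ (Fin m))) [IsProbabilityMeasure μ]
    (a : Fin k → NNReal) (hsum : ∑ i, a i = 1)
    (x : Fin k → EuclideanSpace ℝ (Fin m))
    (A : Finset (EuclideanSpace ℝ (Fin m))) (hA : A.Nonempty)
    (hint : ∀ B : Finset (EuclideanSpace ℝ (Fin m)), B.Nonempty →
      Integrable (fun z => Real.log (infDist z (B : Set (EuclideanSpace ℝ (Fin m))))) μ)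
    (hbdd : BddBelow {y | ∃ B : Finset (EuclideanSpace ℝ (Fin m)), B.Nonempty ∧
      B.card ≤ k * n ∧ y = ∫ z, Real.log (infDist z (B : Set (EuclideanSpace ℝ (Fin m))))
        ∂(∑ i, (a i) • μ.map (· + x i))}) :
    ((Finset.univ : Finset (Fin k)).biUnion (fun i => A.image (· + x i))).card
        ≤ k * A.card ∧
    (∀ (z : EuclideanSpace ℝ (Fin m)) (i : Fin k),
      infDist (z + x i)
          (((Finset.univ : Finset (Fin k)).biUnion (fun i => A.image (· + x i)) : Finset _) :
            Set (EuclideanSpace ℝ (Fin m)))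
        ≤ infDist z (A : Set (EuclideanSpace ℝ (Fin m)))) ∧
    logEn m (k * n) (∑ i, (a i) • μ.map (· + x i)) ≤ logEn m n μ := by
  obtain ⟨i₀, -, ha₀⟩ := exists_ne_zero_of_sum_ne_zero (hsum.symm ▸ one_ne_zero : ∑ i, a i ≠ 0)
  have : Nonempty (Fin k) := ⟨i₀⟩
  have hsep (B : Finset (EuclideanSpace ℝ (Fin m))) (i : Fin k) :
      ∀ᵐ z ∂μ, z + x i ∈ univ.biUnion (fun j => B.image (· + x j)) → z ∈ B := by
    rcases subsingleton_or_nontrivial (EuclideanSpace ℝ (Fin m)) with hE | hE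
    · refine ae_of_all _ fun z hz => ?_
      obtain ⟨j, -, hj⟩ := mem_biUnion.1 hz
      obtain ⟨b, hb, -⟩ := mem_image.1 hj
      rwa [Subsingleton.elim z b]
    · have hatom (z : EuclideanSpace ℝ (Fin m)) : μ {z} = 0 := by
        by_contra hz
        exact not_bddBelow_integral_log_infDist_of_atom _
          (LogDistIntegrable.sum_smul_map_add hint a x)
          (sum_smul_map_add_singleton_ne_zero x ha₀ hz) (Nat.mul_pos (Fin.pos i₀) hn) hbdd
      exact (ae_add_notMem_of_measure_singleton_eq_zero hatom _ (x i)).mono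
        fun z hz h => absurd h hz
  refine ⟨by simpa using card_biUnion_image_add_le A x,
    infDist_add_le_infDist_biUnion_image_add hA x, ?_⟩
  refine le_csInf ⟨_, {0}, singleton_nonempty 0, by simpa using Nat.one_le_of_lt hn, rfl⟩ ?_
  rintro _ ⟨B, hB, hBn, rfl⟩
  refine (csInf_le hbdd ⟨_, univ_nonempty.biUnion fun _ _ => hB.image _, ?_, rfl⟩).trans
    (integral_log_infDist_biUnion_image_add_le hint hsum x hB (hsep B))
  simpa using (card_biUnion_image_add_le B x).trans (Nat.mul_le_mul_left _ hBn)

theorem convolution_codebook (m k n : ℕ) (hk : 0 < k) (hn : 0 < n)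
    [DecidableEq (EuclideanSpace ℝ (Fin m))]
    (μ : Measure (EuclideanSpace ℝ (Fin m))) [IsProbabilityMeasure μ]
    (a : Fin k → NNReal) (ha : ∀ i, 0 < a i) (hsum : ∑ i, a i = 1)
    (x : Fin k → EuclideanSpace ℝ (Fin m))
    (A : Finset (EuclideanSpace ℝ (Fin m))) (hA : A.Nonempty)
    (hint : ∀ B : Finset (EuclideanSpace ℝ (Fin m)), B.Nonempty →
      Integrable (fun z => Real.log (infDist z (B : Set (EuclideanSpace ℝ (Fin m))))) μ)
    (hbdd : BddBelow {y | ∃ B : Finset (EuclideanSpace ℝ (Fin m)), B.Nonempty ∧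
      B.card ≤ k * n ∧ y = ∫ z, Real.log (infDist z (B : Set (EuclideanSpace ℝ (Fin m))))
        ∂(∑ i, (a i) • μ.map (· + x i))}) :
    ((Finset.univ : Finset (Fin k)).biUnion (fun i => A.image (· + x i))).card
        ≤ k * A.card ∧
    (∀ (z : EuclideanSpace ℝ (Fin m)) (i : Fin k),
      infDist (z + x i)
          (((Finset.univ : Finset (Fin k)).biUnion (fun i => A.image (· + x i)) : Finset _) :
            Set (EuclideanSpace ℝ (Fin m)))
        ≤ infDist z (A : Set (EuclideanSpace ℝ (Fin m)))) ∧
    logEn m (k * n) (∑ i, (a i) • μ.map (· + x i)) ≤ logEn m n μ :=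
  convolution_codebook_general m k n hn μ a hsum x A hA hint hbdd
end

section
/- If ν is a finitely supported probability measure on ℝ^m and μ is a finite Borel measure, then the geometric-mean quantization dimension is invariant under convolution: D_0(μ * ν) = D_0(μ), assuming both dimensions exist. -/
/-!
Write `ν = ∑ aᵢ μ(· - xᵢ)` and `e(n, ·)` for the infimum of `∫ log d(·, A)` over sets `A` of at
most `n` points. Since `∫ log d(·, A) dν = ∑ aᵢ ∫ log d(·, A - xᵢ) dμ` is an average, some translate
`A - xᵢ` does at least as well for `μ`, so `e(n, μ) ≤ e(n, ν)`. Conversely, an `n`-point set `A`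
yields the `n k`-point set `s + A + {x₁, …, x_k}`, each of whose translates back by an `xᵢ` contains
`s + A`; a small shift `s` costs at most `ε`, and a generic one keeps the other points off the
log-singularities of `μ` (Fubini along a line), so `e(n k, ν) ≤ e(n, μ)`. The sandwich
`e(n k, μ) ≤ e(n k, ν) ≤ e(n, μ)` together with `log (n k) = log n + log k` makes the limits of
`log n / -e(n, ·)` agree.
-/

open MeasureTheory Metric Filter

def HasQDimZero (m : ℕ) (μ : Measure (EuclideanSpace ℝ (Fin m))) (D : ℝ) : Prop :=
  Tendsto (fun n : ℕ => Real.log n / (-(logEn m n μ))) atTop (nhds D)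

open scoped ENNReal NNReal Pointwise Topology

section LogInfDist

variable {E : Type*} [NormedAddCommGroup E]

noncomputable def logInfDist (A : Finset E) (y : E) : ℝ :=
  Real.log (infDist y (A : Set E))

theorem infDist_neg_vadd (y v : E) (s : Set E) : infDist y (-v +ᵥ s) = infDist (y + v) s := by
  rw [infDist, infDist, ← infEDist_vadd (-v) (y + v), vadd_eq_add, neg_add_cancel_comm_assoc]

theorem infDist_vadd_le (y v : E) (s : Set E) : infDist y (v +ᵥ s) ≤ infDist y s + ‖v‖ := by
  calc infDist y (v +ᵥ s) = infDist (y + -v) s := by rw [← infDist_neg_vadd, neg_neg]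
    _ ≤ infDist y s + ‖v‖ := by
      simpa [dist_eq_norm] using infDist_le_infDist_add_dist (x := y + -v) (y := y) (s := s)

theorem logInfDist_add [DecidableEq E] (A : Finset E) (v : E) :
    (fun y => logInfDist A (y + v)) = logInfDist (-v +ᵥ A) := by
  ext y
  rw [logInfDist, logInfDist, Finset.coe_vadd_finset, infDist_neg_vadd]

theorem logInfDist_eq_zero_of_subsingleton [Subsingleton E] {A : Finset E} (hA : A.Nonempty)
    (y : E) : logInfDist A y = 0 := by
  obtain ⟨b, hb⟩ := hA
  rw [logInfDist, infDist_zero_of_mem (Subsingleton.elim b y ▸ hb : y ∈ (A : Set E)),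
    Real.log_zero]

variable [MeasurableSpace E]

noncomputable def intLogInfDist (μ : Measure E) (A : Finset E) : ℝ :=
  ∫ y, logInfDist A y ∂μ

def intLogInfDistValues (n : ℕ) (μ : Measure E) : Set ℝ :=
  {c | ∃ A : Finset E, A.Nonempty ∧ A.card ≤ n ∧ c = intLogInfDist μ A}

theorem logEn_eq_sInf (m n : ℕ) (μ : Measure (EuclideanSpace ℝ (Fin m))) :
    logEn m n μ = sInf (intLogInfDistValues n μ) := rfl

theorem intLogInfDistValues_mono (μ : Measure E) {p q : ℕ} (h : p ≤ q) :
    intLogInfDistValues p μ ⊆ intLogInfDistValues q μ :=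
  fun _ ⟨A, hA, hcard, hc⟩ => ⟨A, hA, hcard.trans h, hc⟩

theorem intLogInfDistValues_nonempty (μ : Measure E) {n : ℕ} (hn : 1 ≤ n) :
    (intLogInfDistValues n μ).Nonempty :=
  ⟨_, {0}, Finset.singleton_nonempty 0, by simpa using hn, rfl⟩

theorem measurable_logInfDist [BorelSpace E] (A : Finset E) : Measurable (logInfDist A) :=
  (continuous_infDist_pt _).measurable.log

end LogInfDist

section TranslateMix

variable {E : Type*} [NormedAddCommGroup E] [MeasurableSpace E] [BorelSpace E]
  {ι : Type*} [Fintype ι] {μ : Measure E} {a : ι → ℝ≥0} {x : ι → E}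

theorem integrable_translateMix_iff (ha : ∀ i, a i ≠ 0) {f : E → ℝ} (hf : Measurable f) :
    Integrable f (∑ i, a i • μ.map (· + x i)) ↔ ∀ i, Integrable (fun y => f (y + x i)) μ := by
  simp only [integrable_finsetSum_measure, Finset.mem_univ, true_implies]
  refine forall_congr' fun i => ?_
  rw [ENNReal.smul_def, integrable_smul_measure (by simpa using ha i) ENNReal.coe_ne_top,
    integrable_map_measure hf.aestronglyMeasurable (measurable_add_const _).aemeasurable]
  rfl

theorem integral_translateMix {f : E → ℝ} (hf : Measurable f)
    (hint : ∀ i, Integrable (fun y => f (y + x i)) μ) :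
    ∫ y, f y ∂(∑ i, a i • μ.map (· + x i)) = ∑ i, (a i : ℝ) * ∫ y, f (y + x i) ∂μ := by
  have hmap (i : ι) : Integrable f (μ.map (· + x i)) :=
    (integrable_map_measure hf.aestronglyMeasurable (measurable_add_const _).aemeasurable).2
      (hint i)
  rw [integral_finsetSum_measure (μ := fun i => a i • μ.map (· + x i))
    fun i _ => (hmap i).smul_measure ENNReal.coe_ne_top]
  refine Finset.sum_congr rfl fun i _ => ?_
  rw [ENNReal.smul_def, integral_smul_measure,
    integral_map (measurable_add_const _).aemeasurable hf.aestronglyMeasurable]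
  rfl

theorem exists_le_sum_mul [Nonempty ι] {w q : ι → ℝ} (hw : ∀ i, 0 ≤ w i)
    (hsum : ∑ i, w i = 1) : ∃ i, q i ≤ ∑ j, w j * q j := by
  obtain ⟨i, -, hi⟩ := Finset.univ.exists_min_image q Finset.univ_nonempty
  refine ⟨i, ?_⟩
  calc q i = ∑ j, w j * q i := by rw [← Finset.sum_mul, hsum, one_mul]
    _ ≤ ∑ j, w j * q j :=
      Finset.sum_le_sum fun j _ => mul_le_mul_of_nonneg_left (hi j (Finset.mem_univ j)) (hw j)

variable [DecidableEq E]

theorem integrable_logInfDist_translateMix_iff (ha : ∀ i, a i ≠ 0) (A : Finset E) :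
    Integrable (logInfDist A) (∑ i, a i • μ.map (· + x i)) ↔
      ∀ i, Integrable (logInfDist (-x i +ᵥ A)) μ := by
  simp only [integrable_translateMix_iff ha (measurable_logInfDist A), logInfDist_add]

theorem intLogInfDist_translateMix {A : Finset E}
    (hint : ∀ i, Integrable (logInfDist (-x i +ᵥ A)) μ) :
    intLogInfDist (∑ i, a i • μ.map (· + x i)) A =
      ∑ i, (a i : ℝ) * intLogInfDist μ (-x i +ᵥ A) := by
  simp only [intLogInfDist]
  rw [integral_translateMix (measurable_logInfDist A) (by simpa only [logInfDist_add] using hint)]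
  simp only [logInfDist_add]

theorem exists_intLogInfDist_le_translateMix [Nonempty ι] (ha : ∀ i, 0 < a i)
    (hsum : ∑ i, a i = 1) (A : Finset E) :
    ∃ i, intLogInfDist μ (-x i +ᵥ A) ≤ intLogInfDist (∑ i, a i • μ.map (· + x i)) A := by
  by_cases hint : ∀ i, Integrable (logInfDist (-x i +ᵥ A)) μ
  · rw [intLogInfDist_translateMix hint]
    exact exists_le_sum_mul (fun i => (a i).coe_nonneg) (by exact_mod_cast hsum)
  · obtain ⟨i, hi⟩ := not_forall.1 hint
    have hν : ¬ Integrable (logInfDist A) (∑ i, a i • μ.map (· + x i)) := by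
      rw [integrable_logInfDist_translateMix_iff fun i => (ha i).ne']
      exact fun h => hi (h i)
    exact ⟨i, by rw [intLogInfDist, intLogInfDist, integral_undef hi, integral_undef hν]⟩

end TranslateMix

section NegLogPart

/-- `(-log r)⁺`, except that the pole at `r = 0` is kept as `∞`, so that a finite integral of
`negLogPart (dist · q)` also rules out an atom at `q`. -/
noncomputable def negLogPart (r : ℝ) : ℝ≥0∞ :=
  if r = 0 then ∞ else ENNReal.ofReal (-Real.log r)

theorem measurable_negLogPart : Measurable negLogPart :=
  Measurable.ite (measurableSet_singleton 0) measurable_const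
    Real.measurable_log.neg.ennreal_ofReal

theorem negLogPart_le_of_le {r d : ℝ} (hr : 0 ≤ r) (hrd : r ≤ d) : negLogPart d ≤ negLogPart r := by
  rcases hr.eq_or_lt with rfl | hr
  · simp [negLogPart]
  · rw [negLogPart, negLogPart, if_neg (hr.trans_le hrd).ne', if_neg hr.ne']
    exact ENNReal.ofReal_le_ofReal (neg_le_neg (Real.log_le_log hr hrd))

theorem neg_log_le_toReal_negLogPart (r : ℝ) : -Real.log r ≤ (negLogPart r).toReal := by
  unfold negLogPart
  split_ifs with h
  · simp [h]
  · exact ENNReal.toReal_ofReal' ▸ le_max_left _ _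

theorem lintegral_negLogPart_abs_lt_top : ∫⁻ u : ℝ, negLogPart |u| < ∞ := by
  have hlog : IntegrableOn Real.log (Set.Icc (-1) 1) :=
    (intervalIntegrable_iff_integrableOn_Icc_of_le (by norm_num)).1
      intervalIntegral.intervalIntegrable_log'
  have hle : ∀ᵐ u : ℝ, negLogPart |u| ≤ (Set.Icc (-1) 1).indicator (‖Real.log ·‖ₑ) u := by
    filter_upwards [Measure.ae_ne volume 0] with u hu
    rw [negLogPart, if_neg (abs_ne_zero.2 hu), Real.log_abs]
    by_cases hu1 : u ∈ Set.Icc (-1) 1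
    · rw [Set.indicator_of_mem hu1, ← ofReal_norm]
      exact ENNReal.ofReal_le_ofReal ((neg_le_abs _).trans_eq (Real.norm_eq_abs _).symm)
    · have : 1 < |u| := not_le.1 fun h => hu1 (abs_le.1 h)
      have : 0 ≤ Real.log u := Real.log_abs u ▸ Real.log_nonneg this.le
      simp [Set.indicator_of_notMem hu1, this]
  calc ∫⁻ u : ℝ, negLogPart |u|
      ≤ ∫⁻ u : ℝ, (Set.Icc (-1) 1).indicator (‖Real.log ·‖ₑ) u := lintegral_mono_ae hle
    _ = ∫⁻ u in Set.Icc (-1) 1, ‖Real.log u‖ₑ := lintegral_indicator measurableSet_Icc _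
    _ < ∞ := hlog.2

variable {E : Type*} [NormedAddCommGroup E] [MeasurableSpace E] [BorelSpace E]
  {μ : Measure E} {q : E}

theorem measure_singleton_eq_zero_of_lintegral_negLogPart_lt_top
    (h : ∫⁻ z, negLogPart (dist z q) ∂μ < ∞) : μ {q} = 0 := by
  by_contra hq
  have : ∫⁻ z in {q}, negLogPart (dist z q) ∂μ = ∞ := by
    rw [setLIntegral_congr_fun (measurableSet_singleton q) fun z hz => by
      rw [Set.mem_singleton_iff.1 hz, dist_self, negLogPart, if_pos rfl], setLIntegral_const,
      ENNReal.top_mul hq]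
  exact (setLIntegral_le_lintegral _ _).trans_lt h |>.ne this

theorem integrable_toReal_negLogPart (h : ∫⁻ z, negLogPart (dist z q) ∂μ < ∞) :
    Integrable (fun z => (negLogPart (dist z q)).toReal) μ :=
  integrable_toReal_of_lintegral_ne_top
    (measurable_negLogPart.comp (continuous_id.dist continuous_const).measurable).aemeasurable h.ne

variable [NormedSpace ℝ E] [IsFiniteMeasure μ]

/-- Fubini in `(t, z)`: after projecting `z` to the line through `p` in direction `v`, the
inner `t`-integral is that of `negLogPart |c - t|`, which is finite and independent of `c`. -/
theorem ae_lintegral_negLogPart_dist_lt_top (p : E) {v : E} (hv : ‖v‖ = 1) :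
    ∀ᵐ t : ℝ, ∫⁻ z, negLogPart (dist z (p + t • v)) ∂μ < ∞ := by
  obtain ⟨g, hg, hgv⟩ := exists_dual_vector ℝ v (by simp [hv])
  have hproj (z : E) (t : ℝ) : |g (z - p) - t| ≤ dist z (p + t • v) := by
    have : g (z - p) - t = g (z - (p + t • v)) := by simp [hgv, hv, sub_add_eq_sub_sub]
    rw [this, dist_eq_norm, ← Real.norm_eq_abs]
    exact (g.le_opNorm _).trans_eq (by rw [hg, one_mul])
  have hmeas : Measurable (Function.uncurry fun t z => negLogPart (dist z (p + t • v))) :=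
    measurable_negLogPart.comp
      (by fun_prop : Continuous fun q : ℝ × E => dist q.2 (p + q.1 • v)).measurable
  refine ae_lt_top hmeas.lintegral_prod_right' (lt_top_iff_ne_top.1 ?_)
  calc ∫⁻ t, ∫⁻ z, negLogPart (dist z (p + t • v)) ∂μ
      = ∫⁻ z, (∫⁻ t, negLogPart (dist z (p + t • v))) ∂μ :=
        lintegral_lintegral_swap hmeas.aemeasurable
    _ ≤ ∫⁻ z, (∫⁻ t, negLogPart |g (z - p) - t|) ∂μ :=
      lintegral_mono fun z => lintegral_mono fun t =>
        negLogPart_le_of_le (abs_nonneg _) (hproj z t)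
    _ = ∫⁻ _ : E, (∫⁻ u : ℝ, negLogPart |u|) ∂μ := by
      simp_rw [lintegral_sub_left_eq_self (fun u => negLogPart |u|)]
    _ < ∞ := by
      rw [lintegral_const]
      exact ENNReal.mul_lt_top lintegral_negLogPart_abs_lt_top (measure_lt_top μ _)

theorem exists_norm_lt_forall_lintegral_negLogPart_lt_top [Nontrivial E] (P : Finset E) {δ : ℝ}
    (hδ : 0 < δ) : ∃ s : E, ‖s‖ < δ ∧ ∀ p ∈ P, ∫⁻ z, negLogPart (dist z (p + s)) ∂μ < ∞ := by
  obtain ⟨v, hv⟩ := exists_norm_eq E zero_le_one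
  have hgood : ∀ᵐ t : ℝ ∂volume.restrict (Set.Ioo 0 δ),
      ∀ p ∈ P, ∫⁻ z, negLogPart (dist z (p + t • v)) ∂μ < ∞ :=
    ae_restrict_of_ae <| (eventually_all_finset P).2 fun p _ =>
      ae_lintegral_negLogPart_dist_lt_top p hv
  obtain ⟨t, ⟨ht0, htδ⟩, ht⟩ :=
    Measure.exists_mem_of_measure_ne_zero_of_ae (by simp [hδ]) hgood
  exact ⟨t • v, by rwa [norm_smul, hv, mul_one, Real.norm_of_nonneg ht0.le], ht⟩

end NegLogPart

section Approximation

variable {E : Type*} [NormedAddCommGroup E]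

/-- `log (d(y, A) + δ)`, set to `0` where `d(y, A) = 0` to match the junk value `log 0 = 0` of
`logInfDist A`; it tends to `logInfDist A` as `δ → 0⁺`. -/
noncomputable def logInfDistAdd (A : Finset E) (δ : ℝ) (y : E) : ℝ :=
  if infDist y (A : Set E) = 0 then 0 else Real.log (infDist y (A : Set E) + δ)

theorem abs_logInfDistAdd_le (A : Finset E) {δ : ℝ} (hδ0 : 0 ≤ δ) (hδ1 : δ ≤ 1) (y : E) :
    |logInfDistAdd A δ y| ≤ |logInfDist A y| + Real.log 2 := by
  have hlog2 : 0 ≤ Real.log 2 := Real.log_nonneg one_le_two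
  set d := infDist y (A : Set E)
  rw [logInfDistAdd, logInfDist]
  split_ifs with hd
  · rw [abs_zero]
    positivity
  have hd0 : 0 < d := infDist_nonneg.lt_of_ne' hd
  have hlow : Real.log d ≤ Real.log (d + δ) := Real.log_le_log hd0 (by linarith)
  have hup : Real.log (d + δ) ≤ max (Real.log d) 0 + Real.log 2 := by
    rcases le_or_gt d 1 with h1 | h1
    · have : Real.log (d + δ) ≤ Real.log 2 := Real.log_le_log (by linarith) (by linarith)
      linarith [le_max_right (Real.log d) 0]
    · have : Real.log (d + δ) ≤ Real.log (2 * d) := Real.log_le_log (by linarith) (by linarith)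
      rw [Real.log_mul two_ne_zero hd0.ne'] at this
      linarith [le_max_left (Real.log d) 0]
  rw [abs_le]
  constructor <;> cases abs_cases (Real.log d) <;> cases max_cases (Real.log d) 0 <;> linarith

theorem tendsto_logInfDistAdd (A : Finset E) (y : E) :
    Tendsto (fun δ => logInfDistAdd A δ y) (𝓝[>] 0) (𝓝 (logInfDist A y)) := by
  unfold logInfDistAdd logInfDist
  split_ifs with hd
  · simp [hd]
  · have : Tendsto (fun δ => infDist y (A : Set E) + δ) (𝓝 0) (𝓝 (infDist y (A : Set E))) := by
      simpa using (continuous_const_add _).tendsto (0 : ℝ)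
    exact ((Real.continuousAt_log hd).tendsto.comp this).mono_left nhdsWithin_le_nhds

theorem ae_zero_lt_infDist [MeasurableSpace E] {μ : Measure E} {B : Finset E} (hB : B.Nonempty)
    (hnull : ∀ b ∈ B, μ {b} = 0) : ∀ᵐ y ∂μ, 0 < infDist y (B : Set E) := by
  have : ∀ᵐ y ∂μ, ∀ b ∈ B, y ∉ ({b} : Set E) :=
    (eventually_all_finset B).2 fun b hb => measure_eq_zero_iff_ae_notMem.1 (hnull b hb)
  filter_upwards [this] with y hy
  exact (B.isClosed.notMem_iff_infDist_pos (Finset.coe_nonempty.2 hB)).1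
    fun hyB => hy y hyB rfl

variable [MeasurableSpace E] [BorelSpace E] {μ : Measure E}

theorem measurable_logInfDistAdd (A : Finset E) (δ : ℝ) : Measurable (logInfDistAdd A δ) :=
  have hd : Measurable fun y => infDist y (A : Set E) := (continuous_infDist_pt _).measurable
  Measurable.ite (hd (measurableSet_singleton 0)) measurable_const (hd.add_const δ).log

theorem integrable_logInfDistAdd [IsFiniteMeasure μ] {A : Finset E}
    (hA : Integrable (logInfDist A) μ) {δ : ℝ} (hδ0 : 0 ≤ δ) (hδ1 : δ ≤ 1) :
    Integrable (logInfDistAdd A δ) μ :=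
  (hA.abs.add (integrable_const _)).mono' (measurable_logInfDistAdd A δ).aestronglyMeasurable
    (ae_of_all _ fun y => abs_logInfDistAdd_le A hδ0 hδ1 y)

theorem exists_integral_logInfDistAdd_le [IsFiniteMeasure μ] {A : Finset E}
    (hA : Integrable (logInfDist A) μ) {ε : ℝ} (hε : 0 < ε) :
    ∃ δ, 0 < δ ∧ δ ≤ 1 ∧ ∫ y, logInfDistAdd A δ y ∂μ ≤ intLogInfDist μ A + ε := by
  have hsmall : ∀ᶠ δ in 𝓝[>] (0 : ℝ), δ ∈ Set.Ioc 0 1 := Ioc_mem_nhdsGT one_pos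
  have hlim : Tendsto (fun δ => ∫ y, logInfDistAdd A δ y ∂μ) (𝓝[>] 0) (𝓝 (intLogInfDist μ A)) :=
    tendsto_integral_filter_of_dominated_convergence _
      (.of_forall fun δ => (measurable_logInfDistAdd A δ).aestronglyMeasurable)
      (hsmall.mono fun δ hδ => ae_of_all _ fun y => abs_logInfDistAdd_le A hδ.1.le hδ.2 y)
      (hA.abs.add (integrable_const _)) (ae_of_all _ (tendsto_logInfDistAdd A))
  obtain ⟨δ, hδ, hle⟩ :=
    (hsmall.and (hlim.eventually (eventually_le_nhds (lt_add_of_pos_right _ hε)))).exists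
  exact ⟨δ, hδ.1, hδ.2, hle⟩

theorem integrable_logInfDist_of_ae_le {B : Finset E} (hB : B.Nonempty)
    (hneg : ∀ b ∈ B, ∫⁻ z, negLogPart (dist z b) ∂μ < ∞) {g : E → ℝ} (hg : Integrable g μ)
    (hle : ∀ᵐ y ∂μ, logInfDist B y ≤ g y) : Integrable (logInfDist B) μ := by
  have hsing : Integrable (fun y => ∑ b ∈ B, (negLogPart (dist y b)).toReal) μ :=
    integrable_finsetSum B fun b hb => integrable_toReal_negLogPart (hneg b hb)
  refine (hg.abs.add hsing).mono' (measurable_logInfDist B).aestronglyMeasurable ?_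
  filter_upwards [hle] with y hy
  have hsum_nonneg : 0 ≤ ∑ b ∈ B, (negLogPart (dist y b)).toReal :=
    Finset.sum_nonneg fun _ _ => ENNReal.toReal_nonneg
  obtain ⟨b, hb, hbd⟩ :=
    B.finite_toSet.isCompact.exists_infDist_eq_dist (Finset.coe_nonempty.2 hB) y
  have hlow : -(negLogPart (dist y b)).toReal ≤ logInfDist B y := by
    rw [logInfDist, hbd]
    linarith [neg_log_le_toReal_negLogPart (dist y b)]
  rw [Real.norm_eq_abs, Pi.add_apply, abs_le]
  constructor
  · linarith [abs_nonneg (g y), Finset.single_le_sum (fun b _ => ENNReal.toReal_nonneg)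
      (Finset.mem_coe.1 hb) (f := fun b => (negLogPart (dist y b)).toReal)]
  · linarith [le_abs_self (g y)]

theorem integrable_logInfDist_and_intLogInfDist_le [IsFiniteMeasure μ] {A B : Finset E}
    (hB : B.Nonempty) (hneg : ∀ b ∈ B, ∫⁻ z, negLogPart (dist z b) ∂μ < ∞)
    (hA : Integrable (logInfDist A) μ) {δ : ℝ} (hδ0 : 0 ≤ δ) (hδ1 : δ ≤ 1)
    (hdist : ∀ y, infDist y (B : Set E) ≤ infDist y (A : Set E) + δ) :
    Integrable (logInfDist B) μ ∧ intLogInfDist μ B ≤ ∫ y, logInfDistAdd A δ y ∂μ := by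
  have hle : ∀ᵐ y ∂μ, logInfDist B y ≤ logInfDistAdd A δ y := by
    filter_upwards [ae_zero_lt_infDist hB fun b hb =>
      measure_singleton_eq_zero_of_lintegral_negLogPart_lt_top (hneg b hb)] with y hy
    rw [logInfDist, logInfDistAdd]
    split_ifs with hd
    · exact Real.log_nonpos hy.le (by linarith [hdist y])
    · exact Real.log_le_log hy (hdist y)
  have hint := integrable_logInfDist_of_ae_le hB hneg (integrable_logInfDistAdd hA hδ0 hδ1) hle
  exact ⟨hint, integral_mono_ae hint (integrable_logInfDistAdd hA hδ0 hδ1) hle⟩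

end Approximation

section Quantizers

variable {E : Type*} [NormedAddCommGroup E] {ι : Type*} [Fintype ι] {x : ι → E}

theorem vadd_subset_neg_vadd_vadd_add_image [DecidableEq E] (s : E) (A : Finset E) (i : ι) :
  s +ᵥ A ⊆ -x i +ᵥ (s +ᵥ (A + Finset.univ.image x)) := by
  intro b hb
  obtain ⟨c, hc, rfl⟩ := Finset.mem_vadd_finset.1 hb
  refine Finset.mem_vadd_finset.2 ⟨s + (c + x i), Finset.mem_vadd_finset.2
    ⟨c + x i, Finset.add_mem_add hc (Finset.mem_image_of_mem x (Finset.mem_univ i)), rfl⟩, ?_⟩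
  simp only [vadd_eq_add]
  abel

theorem neg_vadd_vadd_add_image_subset [DecidableEq E] (s : E) (A : Finset E) (i : ι) :
  -x i +ᵥ (s +ᵥ (A + Finset.univ.image x)) ⊆
    s +ᵥ (A + Finset.univ.image x - Finset.univ.image x) := by
  intro b hb
  obtain ⟨c, hc, rfl⟩ := Finset.mem_vadd_finset.1 hb
  obtain ⟨d, hd, rfl⟩ := Finset.mem_vadd_finset.1 hc
  obtain ⟨a', ha', y, hy, rfl⟩ := Finset.mem_add.1 hd
  refine Finset.mem_vadd_finset.2 ⟨a' + y - x i, Finset.sub_mem_sub (Finset.add_mem_add ha' hy)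
    (Finset.mem_image_of_mem x (Finset.mem_univ i)), ?_⟩
  simp only [vadd_eq_add]
  abel

theorem card_vadd_add_image_le [DecidableEq E] (s : E) (A : Finset E) :
    (s +ᵥ (A + Finset.univ.image x)).card ≤ A.card * Fintype.card ι :=
  (Finset.card_vadd_finset _ _).trans_le <| Finset.card_add_le.trans <|
    Nat.mul_le_mul_left _ (Finset.card_image_le.trans_eq Finset.card_univ)

variable [NormedSpace ℝ E] [MeasurableSpace E] [BorelSpace E] [Nonempty ι]
  {μ : Measure E} [IsFiniteMeasure μ] {a : ι → ℝ≥0}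

theorem exists_intLogInfDist_translateMix_le_of_integrable [Nontrivial E] (hsum : ∑ i, a i = 1)
    {A : Finset E} (hA : A.Nonempty) (hint : Integrable (logInfDist A) μ) {ε : ℝ} (hε : 0 < ε) :
    ∃ B : Finset E, B.Nonempty ∧ B.card ≤ A.card * Fintype.card ι ∧
      intLogInfDist (∑ i, a i • μ.map (· + x i)) B ≤ intLogInfDist μ A + ε := by
  classical
  obtain ⟨δ, hδ0, hδ1, hδ⟩ := exists_integral_logInfDistAdd_le hint hε
  set X := Finset.univ.image x
  obtain ⟨s, hs, hP⟩ := exists_norm_lt_forall_lintegral_negLogPart_lt_top (μ := μ) (A + X - X) hδ0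
  have hBne : (s +ᵥ (A + X)).Nonempty := (hA.add (Finset.univ_nonempty.image x)).vadd_finset
  have hB (i : ι) : Integrable (logInfDist (-x i +ᵥ (s +ᵥ (A + X)))) μ ∧
      intLogInfDist μ (-x i +ᵥ (s +ᵥ (A + X))) ≤ ∫ y, logInfDistAdd A δ y ∂μ := by
    refine integrable_logInfDist_and_intLogInfDist_le hBne.vadd_finset (fun b hb => ?_) hint
      hδ0.le hδ1 fun y => ?_
    · obtain ⟨p, hp, rfl⟩ := Finset.mem_vadd_finset.1 (neg_vadd_vadd_add_image_subset s A i hb)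
      simpa [add_comm] using hP p hp
    · calc infDist y (-x i +ᵥ (s +ᵥ (A + X)) : Finset E)
          ≤ infDist y (s +ᵥ A : Finset E) := infDist_le_infDist_of_subset
            (Finset.coe_subset.2 (vadd_subset_neg_vadd_vadd_add_image s A i))
            (Finset.coe_nonempty.2 hA.vadd_finset)
        _ ≤ infDist y (A : Set E) + ‖s‖ := by
          rw [Finset.coe_vadd_finset]
          exact infDist_vadd_le y s A
        _ ≤ infDist y (A : Set E) + δ := by linarith
  refine ⟨s +ᵥ (A + X), hBne, card_vadd_add_image_le s A, ?_⟩
  rw [intLogInfDist_translateMix fun i => (hB i).1]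
  calc ∑ i, (a i : ℝ) * intLogInfDist μ (-x i +ᵥ (s +ᵥ (A + X)))
      ≤ ∑ i, (a i : ℝ) * ∫ y, logInfDistAdd A δ y ∂μ :=
        Finset.sum_le_sum fun i _ => mul_le_mul_of_nonneg_left (hB i).2 (a i).coe_nonneg
    _ = ∫ y, logInfDistAdd A δ y ∂μ := by
        rw [← Finset.sum_mul, ← NNReal.coe_sum, hsum, NNReal.coe_one, one_mul]
    _ ≤ intLogInfDist μ A + ε := hδ

theorem exists_intLogInfDist_translateMix_le (ha : ∀ i, 0 < a i) (hsum : ∑ i, a i = 1)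
    {A : Finset E} (hA : A.Nonempty) {ε : ℝ} (hε : 0 < ε) :
    ∃ B : Finset E, B.Nonempty ∧ B.card ≤ A.card * Fintype.card ι ∧
      intLogInfDist (∑ i, a i • μ.map (· + x i)) B ≤ intLogInfDist μ A + ε := by
  classical
  rcases subsingleton_or_nontrivial E with _ | _
  · refine ⟨A, hA, Nat.le_mul_of_pos_right _ Fintype.card_pos, ?_⟩
    simp [intLogInfDist, logInfDist_eq_zero_of_subsingleton hA, hε.le]
  by_cases hint : Integrable (logInfDist A) μ
  · exact exists_intLogInfDist_translateMix_le_of_integrable hsum hA hint hε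
  obtain i := Classical.arbitrary ι
  refine ⟨x i +ᵥ A, hA.vadd_finset, ?_, ?_⟩
  · rw [Finset.card_vadd_finset]
    exact Nat.le_mul_of_pos_right _ Fintype.card_pos
  have hν : ¬ Integrable (logInfDist (x i +ᵥ A)) (∑ i, a i • μ.map (· + x i)) := by
    rw [integrable_logInfDist_translateMix_iff fun i => (ha i).ne']
    exact fun h => hint (by simpa using h i)
  rw [intLogInfDist, intLogInfDist, integral_undef hν, integral_undef hint, zero_add]
  exact hε.le

end Quantizers

section Values

variable {E : Type*} [NormedAddCommGroup E] [MeasurableSpace E] [BorelSpace E]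
  {ι : Type*} [Fintype ι] [Nonempty ι] {μ : Measure E} {a : ι → ℝ≥0} (x : ι → E)

theorem exists_mem_intLogInfDistValues_le_of_mem_translateMix (ha : ∀ i, 0 < a i)
    (hsum : ∑ i, a i = 1) {n : ℕ} {c : ℝ}
    (hc : c ∈ intLogInfDistValues n (∑ i, a i • μ.map (· + x i))) :
    ∃ c' ∈ intLogInfDistValues n μ, c' ≤ c := by
  classical
  obtain ⟨A, hA, hcard, rfl⟩ := hc
  obtain ⟨i, hi⟩ := exists_intLogInfDist_le_translateMix ha hsum A
  exact ⟨_, ⟨_, hA.vadd_finset, (Finset.card_vadd_finset _ _).trans_le hcard, rfl⟩, hi⟩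

variable [NormedSpace ℝ E] [IsFiniteMeasure μ]

theorem exists_mem_intLogInfDistValues_translateMix_le (ha : ∀ i, 0 < a i)
    (hsum : ∑ i, a i = 1) {n : ℕ} {c : ℝ} (hc : c ∈ intLogInfDistValues n μ) {ε : ℝ}
    (hε : 0 < ε) :
    ∃ c' ∈ intLogInfDistValues (n * Fintype.card ι) (∑ i, a i • μ.map (· + x i)), c' ≤ c + ε := by
  classical
  obtain ⟨A, hA, hcard, rfl⟩ := hc
  obtain ⟨B, hB, hBcard, hle⟩ :=
    exists_intLogInfDist_translateMix_le (μ := μ) (x := x) ha hsum hA hε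
  exact ⟨_, ⟨B, hB, hBcard.trans (Nat.mul_le_mul_right _ hcard), rfl⟩, hle⟩

/-- From the first `n` (if any) at which the values for `μ` are unbounded below, all these
infima are the junk value `sInf = 0`. -/
theorem exists_sInf_intLogInfDistValues_sandwich (ha : ∀ i, 0 < a i) (hsum : ∑ i, a i = 1) :
    ∃ N, AntitoneOn (fun n => sInf (intLogInfDistValues n μ)) (Set.Ici N) ∧
      ∀ n ≥ N,
        sInf (intLogInfDistValues (n * Fintype.card ι) μ) ≤
          sInf (intLogInfDistValues (n * Fintype.card ι) (∑ i, a i • μ.map (· + x i))) ∧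
        sInf (intLogInfDistValues (n * Fintype.card ι) (∑ i, a i • μ.map (· + x i))) ≤
          sInf (intLogInfDistValues n μ) := by
  set K := Fintype.card ι
  set ν := ∑ i, a i • μ.map (· + x i)
  have hnK (n : ℕ) : n ≤ n * K := Nat.le_mul_of_pos_right _ Fintype.card_pos
  by_cases hbdd : ∀ n, BddBelow (intLogInfDistValues n μ)
  · have hνbdd (n : ℕ) : BddBelow (intLogInfDistValues n ν) := by
      obtain ⟨b, hb⟩ := hbdd n
      refine ⟨b, fun c hc => ?_⟩
      obtain ⟨c', hc', hle⟩ := exists_mem_intLogInfDistValues_le_of_mem_translateMix x ha hsum hc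
      exact (hb hc').trans hle
    refine ⟨1, fun p hp q _ hpq => csInf_le_csInf (hbdd q) (intLogInfDistValues_nonempty μ hp)
      (intLogInfDistValues_mono μ hpq), fun n hn => ⟨?_, ?_⟩⟩
    · refine le_csInf (intLogInfDistValues_nonempty ν (hn.trans (hnK n))) fun c hc => ?_
      obtain ⟨c', hc', hle⟩ := exists_mem_intLogInfDistValues_le_of_mem_translateMix x ha hsum hc
      exact (csInf_le (hbdd _) hc').trans hle
    · refine le_csInf (intLogInfDistValues_nonempty μ hn) fun c hc => ?_
      refine le_of_forall_pos_le_add fun ε hε => ?_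
      obtain ⟨c', hc', hle⟩ := exists_mem_intLogInfDistValues_translateMix_le x ha hsum hc hε
      exact (csInf_le (hνbdd _) hc').trans hle
  obtain ⟨N, hN⟩ := not_forall.1 hbdd
  have hμ0 (n : ℕ) (hn : N ≤ n) : sInf (intLogInfDistValues n μ) = 0 :=
    Real.sInf_of_not_bddBelow fun h => hN (h.mono (intLogInfDistValues_mono μ hn))
  have hνN : ¬ BddBelow (intLogInfDistValues (N * K) ν) := by
    rintro ⟨b, hb⟩
    refine hN ⟨b - 1, fun c hc => ?_⟩
    obtain ⟨c', hc', hle⟩ := exists_mem_intLogInfDistValues_translateMix_le x ha hsum hc one_pos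
    linarith [hb hc']
  have hν0 (n : ℕ) (hn : N ≤ n) : sInf (intLogInfDistValues (n * K) ν) = 0 :=
    Real.sInf_of_not_bddBelow fun h =>
      hνN (h.mono (intLogInfDistValues_mono ν (Nat.mul_le_mul_right K hn)))
  refine ⟨N, fun p hp q hq _ => (hμ0 q hq).trans_le (hμ0 p hp).ge, fun n hn => ?_⟩
  rw [hμ0 n hn, hμ0 _ (hn.trans (hnK n)), hν0 n hn]
  exact ⟨le_rfl, le_rfl⟩

end Values

section Sequences

theorem eventually_eq_zero_of_tendsto_log_div {f : ℕ → ℝ} {D C : ℝ}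
    (hD : Tendsto (fun n : ℕ => Real.log n / f n) atTop (𝓝 D))
    (hC : ∀ᶠ n in atTop, |f n| ≤ C) : ∀ᶠ n in atTop, f n = 0 := by
  have hlog : Tendsto (fun n : ℕ => Real.log n) atTop atTop :=
    Real.tendsto_log_atTop.comp tendsto_natCast_atTop_atTop
  filter_upwards [hC, hD.abs.eventually (eventually_le_nhds (lt_add_one |D|)),
    hlog.eventually_gt_atTop ((|D| + 1) * C)] with n hfC hg hlogn
  by_contra hf
  have : Real.log n ≤ (|D| + 1) * C := calc
    Real.log n ≤ |Real.log n / f n * f n| := by rw [div_mul_cancel₀ _ hf]; exact le_abs_self _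
    _ = |Real.log n / f n| * |f n| := abs_mul _ _
    _ ≤ (|D| + 1) * C := mul_le_mul hg hfC (abs_nonneg _) (by positivity)
  linarith

variable {E F : ℕ → ℝ} {k N : ℕ} {D D' : ℝ}

theorem eq_of_tendsto_log_div_of_sandwich_of_tendsto_atBot (hk : 0 < k)
    (hE : Tendsto E atTop atBot) (hEF : ∀ n ≥ N, E (n * k) ≤ F (n * k) ∧ F (n * k) ≤ E n)
    (hD : Tendsto (fun n : ℕ => Real.log n / -E n) atTop (𝓝 D))
    (hD' : Tendsto (fun n : ℕ => Real.log n / -F n) atTop (𝓝 D')) : D' = D := by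
  have hnk : Tendsto (· * k) atTop atTop :=
    tendsto_atTop_mono (fun n => Nat.le_mul_of_pos_right n hk) tendsto_id
  have hup : Tendsto (fun n : ℕ => Real.log n / -E n + Real.log k / -E n) atTop (𝓝 D) := by
    simpa using hD.add (tendsto_const_nhds.div_atTop (tendsto_neg_atBot_atTop.comp hE))
  have hev : ∀ᶠ n in atTop, N ≤ n ∧ 1 ≤ n ∧ E n < 0 :=
    (eventually_ge_atTop N).and ((eventually_ge_atTop 1).and (hE.eventually_lt_atBot 0))
  have hlow : ∀ᶠ n in atTop, Real.log ↑(n * k) / -E (n * k) ≤ Real.log ↑(n * k) / -F (n * k) := by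
    filter_upwards [hev] with n hn
    obtain ⟨hN, -, hEn⟩ := hn
    refine div_le_div_of_nonneg_left (Real.log_natCast_nonneg _) ?_ ?_ <;>
      linarith [hEF n hN]
  have hhigh : ∀ᶠ n in atTop,
      Real.log ↑(n * k) / -F (n * k) ≤ Real.log n / -E n + Real.log k / -E n := by
    filter_upwards [hev] with n hn
    obtain ⟨hN, hn, hEn⟩ := hn
    rw [← add_div, ← Real.log_mul (by positivity) (by positivity), ← Nat.cast_mul]
    refine div_le_div_of_nonneg_left (Real.log_natCast_nonneg _) (by linarith) ?_
    linarith [hEF n hN]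
  exact le_antisymm (le_of_tendsto_of_tendsto (hD'.comp hnk) hup hhigh)
    (le_of_tendsto_of_tendsto (hD.comp hnk) (hD'.comp hnk) hlow)

/-- If `E → -∞` this is a squeeze. Otherwise the antitone `E` is bounded, which forces `E n = 0`
eventually (the limits being of junk values `log n / 0 = 0`), and both limits are `0`. -/
theorem eq_of_tendsto_log_div_of_sandwich (hk : 0 < k) (hanti : AntitoneOn E (Set.Ici N))
    (hEF : ∀ n ≥ N, E (n * k) ≤ F (n * k) ∧ F (n * k) ≤ E n)
    (hD : Tendsto (fun n : ℕ => Real.log n / -E n) atTop (𝓝 D))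
    (hD' : Tendsto (fun n : ℕ => Real.log n / -F n) atTop (𝓝 D')) : D' = D := by
  by_cases hbot : Tendsto E atTop atBot
  · exact eq_of_tendsto_log_div_of_sandwich_of_tendsto_atBot hk hbot hEF hD hD'
  obtain ⟨C, hC⟩ : ∃ C, ∀ n ≥ N, C ≤ E n := by
    by_contra! h
    refine hbot (tendsto_atBot.2 fun b => ?_)
    obtain ⟨n₀, hn₀, hlt⟩ := h b
    filter_upwards [eventually_ge_atTop n₀] with n hn
    exact (hanti hn₀ (hn₀.trans hn) hn).trans hlt.le
  have hE0 : ∀ᶠ n in atTop, E n = 0 := by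
    have hbound : ∀ᶠ n in atTop, |-E n| ≤ max |C| |E N| := by
      filter_upwards [eventually_ge_atTop N] with n hn
      rw [abs_neg]
      exact abs_le_max_abs_abs (hC n hn) (hanti (le_refl N) hn hn)
    simpa using eventually_eq_zero_of_tendsto_log_div hD hbound
  have hnk : Tendsto (· * k) atTop atTop :=
    tendsto_atTop_mono (fun n => Nat.le_mul_of_pos_right n hk) tendsto_id
  have hF0 : ∀ᶠ n in atTop, F (n * k) = 0 := by
    filter_upwards [hE0, hnk.eventually hE0, eventually_ge_atTop N] with n h1 h2 hn
    linarith [hEF n hn]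
  rw [tendsto_nhds_unique_of_eventuallyEq hD (tendsto_const_nhds (x := (0 : ℝ)))
      (hE0.mono fun n h => by simp [h]),
    tendsto_nhds_unique_of_eventuallyEq (hD'.comp hnk) (tendsto_const_nhds (x := (0 : ℝ)))
      (hF0.mono fun n h => by simp [h])]

end Sequences

theorem qdimZero_convolution_invariant (m k : ℕ) (hk : 0 < k)
    (μ : Measure (EuclideanSpace ℝ (Fin m))) [IsFiniteMeasure μ]
    (a : Fin k → NNReal) (ha : ∀ i, 0 < a i) (hsum : ∑ i, a i = 1)
    (x : Fin k → EuclideanSpace ℝ (Fin m))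
    (Dμ Dc : ℝ) (hμ : HasQDimZero m μ Dμ)
    (hc : HasQDimZero m (∑ i, (a i) • μ.map (· + x i)) Dc) :
    Dc = Dμ := by
  have : Nonempty (Fin k) := ⟨⟨0, hk⟩⟩
  simp only [HasQDimZero, logEn_eq_sInf] at hμ hc
  obtain ⟨N, hanti, hsandwich⟩ := exists_sInf_intLogInfDistValues_sandwich (μ := μ) x ha hsum
  rw [Fintype.card_fin] at hsandwich
  exact eq_of_tendsto_log_div_of_sandwich hk hanti hsandwich hμ hc
end
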